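/- arXiv:2305.00876 — 4 statements merged into one kernel-verified Lean document; each statement's English description precedes it below -/
import Mathlib

section
/- The expected generalization error of the weighted-average algorithm with Gaussian noise in the scalar Gaussian location problem equals 2σ²/n. Precisely, if Z₁,...,Zₙ are i.i.d. N(μ,σ²), W = Σᵢ αᵢZᵢ + N with N ~ N(0,σ_N²) independent of the Zᵢ, and Σᵢ αᵢ = 1 with αᵢ ≥ 0, then E[(Z̃ − W)²] − (1/n)Σᵢ E[(Zᵢ − W)²] = 2σ²/n, where Z̃ ~ N(μ,σ²) is independent of everything else. -/
/-!
Expand `E[(X - W)²] = Var X - 2 Cov(X, W) + Var W + (E X - E W)²`. Since `Z̃` and `Zᵢ` have the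
same mean and variance, `E[(Z̃ - W)²] - E[(Zᵢ - W)²] = 2 (Cov(Zᵢ, W) - Cov(Z̃, W))`, and by
bilinearity and independence this is `2 αᵢ σ²`. Averaging over `i` with `∑ αᵢ = 1` gives `2σ²/n`.
-/

open MeasureTheory ProbabilityTheory
open scoped NNReal

namespace ProbabilityTheory

lemma hasLaw_of_map_eq {Ω 𝓧 : Type*} [MeasurableSpace Ω] [MeasurableSpace 𝓧] {P : Measure Ω}
    {μ : Measure 𝓧} [NeZero μ] {X : Ω → 𝓧} (h : P.map X = μ) : HasLaw X μ P :=
  ⟨AEMeasurable.of_map_ne_zero (h ▸ NeZero.ne μ), h⟩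

section SecondMoments

variable {Ω : Type*} [MeasurableSpace Ω] {P : Measure Ω}

lemma integral_sub_sq_eq [IsProbabilityMeasure P] {X Y : Ω → ℝ} (hX : MemLp X 2 P)
    (hY : MemLp Y 2 P) :
    ∫ ω, (X ω - Y ω) ^ 2 ∂P
      = Var[X; P] - 2 * cov[X, Y; P] + Var[Y; P] + (P[X] - P[Y]) ^ 2 := by
  have hvar := variance_eq_sub (hX.sub hY)
  simp only [Pi.pow_apply, Pi.sub_apply] at hvar
  rw [variance_sub hX hY, integral_sub (hX.integrable one_le_two) (hY.integrable one_le_two)]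
    at hvar
  linarith

lemma integral_sub_sq_sub_integral_sub_sq [IsProbabilityMeasure P] {X Y W : Ω → ℝ}
    (hX : MemLp X 2 P) (hY : MemLp Y 2 P) (hW : MemLp W 2 P) (hmean : P[X] = P[Y])
    (hvar : Var[X; P] = Var[Y; P]) :
    ∫ ω, (X ω - W ω) ^ 2 ∂P - ∫ ω, (Y ω - W ω) ^ 2 ∂P = 2 * (cov[Y, W; P] - cov[X, W; P]) := by
  rw [integral_sub_sq_eq hX hW, integral_sub_sq_eq hY hW, hmean, hvar]
  ring

lemma covariance_fun_sum_const_mul_add_right [IsFiniteMeasure P] {ι : Type*} [Fintype ι]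
    {X N : Ω → ℝ} {Z : ι → Ω → ℝ} (α : ι → ℝ) (hX : MemLp X 2 P) (hZ : ∀ i, MemLp (Z i) 2 P)
    (hN : MemLp N 2 P) :
    cov[X, fun ω ↦ ∑ i, α i * Z i ω + N ω; P] = ∑ i, α i * cov[X, Z i; P] + cov[X, N; P] := by
  have hαZ : ∀ i, MemLp (fun ω ↦ α i * Z i ω) 2 P := fun i ↦ (hZ i).const_mul (α i)
  rw [show (fun ω ↦ ∑ i, α i * Z i ω + N ω) = (fun ω ↦ ∑ i, α i * Z i ω) + N from rfl,
    covariance_add_right hX (memLp_finsetSum _ fun i _ ↦ hαZ i) hN,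
    covariance_fun_sum_right hαZ hX]
  simp only [covariance_const_mul_right]

lemma iIndepFun.covariance_eq_ite {ι : Type*} [DecidableEq ι] {F : ι → Ω → ℝ}
    (h : iIndepFun F P) (hF : ∀ i, MemLp (F i) 2 P) (i j : ι) :
    cov[F i, F j; P] = if i = j then Var[F i; P] else 0 := by
  split_ifs with hij
  · rw [hij, covariance_self (hF j).aemeasurable]
  · exact (h.indepFun hij).covariance_eq_zero (hF i) (hF j)

end SecondMoments

end ProbabilityTheory

theorem generalization_error_scalar_gaussian_general
    {Ω : Type*} [MeasurableSpace Ω] (P : Measure Ω) [IsProbabilityMeasure P]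
    (n : ℕ) (hn : 0 < n) (μ : ℝ) (σ2 σN2 : ℝ≥0)
    (α : Fin n → ℝ) (hsum : ∑ i, α i = 1)
    (Z : Fin n → Ω → ℝ) (N Ztil : Ω → ℝ)
    (hindep : iIndepFun
      (Sum.elim Z (fun b : Bool => if b then Ztil else N)) P)
    (hZ : ∀ i, Measure.map (Z i) P = gaussianReal μ σ2)
    (hN : Measure.map N P = gaussianReal 0 σN2)
    (hZt : Measure.map Ztil P = gaussianReal μ σ2)
    (W : Ω → ℝ) (hW : W = fun ω => ∑ i, α i * Z i ω + N ω) :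
    (∫ ω, (Ztil ω - W ω) ^ 2 ∂P) - (1 / n) * ∑ i, ∫ ω, (Z i ω - W ω) ^ 2 ∂P
      = 2 * (σ2 : ℝ) / n := by
  have lawZ i := hasLaw_of_map_eq (hZ i)
  have lawZt := hasLaw_of_map_eq hZt
  have hZ2 i := (lawZ i).hasGaussianLaw.memLp_two
  have hN2 := (hasLaw_of_map_eq hN).hasGaussianLaw.memLp_two
  have hZt2 := lawZt.hasGaussianLaw.memLp_two
  have hW2 : MemLp W 2 P :=
    hW ▸ (memLp_finsetSum _ fun j _ ↦ (hZ2 j).const_mul (α j)).add hN2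
  have hcov := hindep.covariance_eq_ite <| by
    rintro (i | _ | _)
    exacts [hZ2 i, hN2, hZt2]
  have covZZ i j : cov[Z i, Z j; P] = if i = j then (σ2 : ℝ) else 0 := by
    simpa [(lawZ i).variance_eq, variance_id_gaussianReal] using hcov (.inl i) (.inl j)
  have covZN i : cov[Z i, N; P] = 0 := by simpa using hcov (.inl i) (.inr false)
  have covZtZ j : cov[Ztil, Z j; P] = 0 := by simpa using hcov (.inr true) (.inl j)
  have covZtN : cov[Ztil, N; P] = 0 := by simpa using hcov (.inr true) (.inr false)
  have gap i : ∫ ω, (Ztil ω - W ω) ^ 2 ∂P - ∫ ω, (Z i ω - W ω) ^ 2 ∂P = 2 * (α i * σ2) := by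
    rw [integral_sub_sq_sub_integral_sub_sq hZt2 (hZ2 i) hW2
      (lawZt.integral_eq.trans (lawZ i).integral_eq.symm)
      (lawZt.variance_eq.trans (lawZ i).variance_eq.symm), hW,
      covariance_fun_sum_const_mul_add_right α (hZ2 i) hZ2 hN2,
      covariance_fun_sum_const_mul_add_right α hZt2 hZ2 hN2]
    simp [covZZ, covZN, covZtZ, covZtN]
  calc _ = (1 / n) * ∑ i, (∫ ω, (Ztil ω - W ω) ^ 2 ∂P - ∫ ω, (Z i ω - W ω) ^ 2 ∂P) := by
        rw [Finset.sum_sub_distrib, Finset.sum_const, Finset.card_univ, Fintype.card_fin,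
          nsmul_eq_mul]
        field_simp
    _ = 2 * (σ2 : ℝ) / n := by
        rw [Finset.sum_congr rfl fun i _ ↦ gap i, ← Finset.mul_sum, ← Finset.sum_mul, hsum]
        ring

/-- The expected generalization error of the weighted-average algorithm with Gaussian
noise in the scalar Gaussian location problem equals `2σ²/n`. -/
theorem generalization_error_scalar_gaussian
    {Ω : Type*} [MeasurableSpace Ω] (P : Measure Ω) [IsProbabilityMeasure P]
    (n : ℕ) (hn : 0 < n) (μ : ℝ) (σ2 σN2 : ℝ≥0)
    (α : Fin n → ℝ) (hα : ∀ i, 0 ≤ α i) (hsum : ∑ i, α i = 1)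
    (Z : Fin n → Ω → ℝ) (N Ztil : Ω → ℝ)
    (hindep : iIndepFun
      (Sum.elim Z (fun b : Bool => if b then Ztil else N)) P)
    (hZ : ∀ i, Measure.map (Z i) P = gaussianReal μ σ2)
    (hN : Measure.map N P = gaussianReal 0 σN2)
    (hZt : Measure.map Ztil P = gaussianReal μ σ2)
    (W : Ω → ℝ) (hW : W = fun ω => ∑ i, α i * Z i ω + N ω) :
    (∫ ω, (Ztil ω - W ω) ^ 2 ∂P) - (1 / n) * ∑ i, ∫ ω, (Z i ω - W ω) ^ 2 ∂P
      = 2 * (σ2 : ℝ) / n :=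
  generalization_error_scalar_gaussian_general P n hn μ σ2 σN2 α hsum Z N Ztil hindep hZ hN hZt W hW
end

section
/- Exact tightness for the scalar Gaussian location problem: with Zᵢ i.i.d. N(μ,σ²), W = ΣⱼαⱼZⱼ + N, Σαⱼ = 1, αⱼ ≥ 0, N ~ N(0,σ_N²) independent, and sᵢ² = Σ_{j≠i}αⱼ²σ² + σ_N² > 0, one has for each i: inf_{λ>0} [ (E[KL(P_{W|Zᵢ}‖Qⁱ_W)] + E[Λ_{Fᵢ,Qⁱ_W}(λ)]) / λ ] = 2αᵢσ², where E[KL] = αᵢ²σ²/(2sᵢ²) and E[Λ(λ)] = 2λ²σ²sᵢ²; consequently (1/n)Σᵢ of these equals 2σ²/n, matching the true generalization error. -/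
/-! By AM-GM, `A / λ + B λ` has infimum `2 √(A B)` over `λ > 0`; with `A = αᵢ²σ² / (2sᵢ²)` and
`B = 2σ²sᵢ²` this is `2 αᵢ σ²`, independently of `sᵢ²`. -/

open Real

lemma two_mul_sqrt_mul_le_add_mul_sq_div {A B l : ℝ} (hA : 0 ≤ A) (hB : 0 ≤ B) (hl : 0 < l) :
    2 * √(A * B) ≤ (A + B * l ^ 2) / l := by
  rw [le_div_iff₀ hl, sqrt_mul hA]
  have hsq : A + B * l ^ 2 - 2 * (√A * √B) * l = (√A - √B * l) ^ 2 := by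
    ring_nf
    rw [sq_sqrt hA, sq_sqrt hB]
    ring
  linarith [hsq ▸ sq_nonneg (√A - √B * l)]

-- The infimum is attained at `l = √A / √B` if `0 < A`, but only approached as `l → 0` if `A = 0`.
theorem iInf_Ioi_add_mul_sq_div_eq {A B : ℝ} (hA : 0 ≤ A) (hB : 0 < B) :
    ⨅ l : Set.Ioi (0 : ℝ), (A + B * (l : ℝ) ^ 2) / l = 2 * √(A * B) := by
  have hlower : ∀ l : Set.Ioi (0 : ℝ), 2 * √(A * B) ≤ (A + B * (l : ℝ) ^ 2) / l :=
    fun l => two_mul_sqrt_mul_le_add_mul_sq_div hA hB.le l.2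
  have hbdd : BddBelow (Set.range fun l : Set.Ioi (0 : ℝ) => (A + B * (l : ℝ) ^ 2) / l) :=
    ⟨_, Set.forall_mem_range.2 hlower⟩
  refine le_antisymm ?_ (le_ciInf hlower)
  rcases hA.eq_or_lt with rfl | hA
  · rw [zero_mul, sqrt_zero, mul_zero]
    refine le_of_forall_pos_le_add fun ε hε => ?_
    refine ciInf_le_of_le hbdd ⟨ε / B, Set.mem_Ioi.2 (div_pos hε hB)⟩ (le_of_eq ?_)
    field_simp
    ring
  · refine ciInf_le_of_le hbdd ⟨√A / √B, Set.mem_Ioi.2 (by positivity)⟩ (le_of_eq ?_)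
    have hB' : 0 < √B := sqrt_pos.2 hB
    have hBl : B * (√A / √B) ^ 2 = A := by
      rw [div_pow, sq_sqrt hA.le, sq_sqrt hB.le]
      field_simp
    rw [hBl, sqrt_mul hA.le]
    nth_rewrite 1 2 [← mul_self_sqrt hA.le]
    field_simp
    ring

theorem exact_tightness_scalar_gaussian_general
    (n : ℕ) (σ2 : ℝ) (hσ : 0 < σ2)
    (α : Fin n → ℝ) (hα : ∀ i, 0 ≤ α i) (hsum : ∑ i, α i = 1)
    (s2 : Fin n → ℝ)
    (hpos : ∀ i, 0 < s2 i) :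
    (∀ i, (⨅ l : Set.Ioi (0 : ℝ),
        (α i ^ 2 * σ2 / (2 * s2 i) + 2 * (l : ℝ) ^ 2 * σ2 * s2 i) / (l : ℝ))
      = 2 * α i * σ2)
    ∧ (1 / n : ℝ) * ∑ i, 2 * α i * σ2 = 2 * σ2 / n := by
  refine ⟨fun i => ?_, ?_⟩
  · have hs := hpos i
    have hprod : α i ^ 2 * σ2 / (2 * s2 i) * (2 * σ2 * s2 i) = (α i * σ2) ^ 2 := by
      field_simp
    have hB : ∀ l : ℝ, 2 * l ^ 2 * σ2 * s2 i = 2 * σ2 * s2 i * l ^ 2 := fun l => by ring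
    simp_rw [hB]
    rw [iInf_Ioi_add_mul_sq_div_eq (by positivity) (by positivity), hprod,
      sqrt_sq (mul_nonneg (hα i) hσ.le)]
    ring
  · rw [← Finset.sum_mul, ← Finset.mul_sum, hsum]
    ring

/-- Exact tightness for the scalar Gaussian location problem:
inf_{λ>0}[(E[KL] + E[Λ(λ)])/λ] = 2αᵢσ² with E[KL] = αᵢ²σ²/(2sᵢ²),
E[Λ(λ)] = 2λ²σ²sᵢ², and (1/n)Σᵢ 2αᵢσ² = 2σ²/n. -/
theorem exact_tightness_scalar_gaussian
    (n : ℕ) (hn : 0 < n) (σ2 σN2 : ℝ) (hσ : 0 < σ2) (hσN : 0 ≤ σN2)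
    (α : Fin n → ℝ) (hα : ∀ i, 0 ≤ α i) (hsum : ∑ i, α i = 1)
    (s2 : Fin n → ℝ)
    (hs2 : ∀ i, s2 i = ∑ j ∈ Finset.univ.erase i, α j ^ 2 * σ2 + σN2)
    (hpos : ∀ i, 0 < s2 i) :
    (∀ i, (⨅ l : Set.Ioi (0 : ℝ),
        (α i ^ 2 * σ2 / (2 * s2 i) + 2 * (l : ℝ) ^ 2 * σ2 * s2 i) / (l : ℝ))
      = 2 * α i * σ2)
    ∧ (1 / n : ℝ) * ∑ i, 2 * α i * σ2 = 2 * σ2 / n :=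
  exact_tightness_scalar_gaussian_general n σ2 hσ α hα hsum s2 hpos
end

section
/- Vector Gaussian generalization error: if Z₁,...,Zₙ are i.i.d. d-dimensional Gaussians N(μ,Σ), W = ΣᵢαᵢZᵢ + N with N ~ N(0,σ_N²I) independent and Σᵢαᵢ = 1, αᵢ ≥ 0, and the loss is ℓ(w,z) = (w−z)ᵀA(w−z) for a symmetric positive definite matrix A, then E[(Z̃−W)ᵀA(Z̃−W)] − (1/n)ΣᵢE[(Zᵢ−W)ᵀA(Zᵢ−W)] = 2·Tr(AΣ)/n, where Z̃ ~ N(μ,Σ) is independent of everything else. -/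
/-!
Write `G` for the independent family `(Z₁, …, Zₙ, Z̃, N)`. Both residuals `Z̃ - W` and `Zᵢ - W`
are centred linear combinations `∑ b_p G_p`, so the `A`-quadratic moment of such a residual is
`∑ b_p² Tr(A Cov G_p)`: the cross terms vanish by independence. The weights `(-α, 1, -1)` and
`(eᵢ - α, 0, -1)` give `(1 + ∑ α²) Tr(AΣ) + c` and `(1 - 2αᵢ + ∑ α²) Tr(AΣ) + c`, where the noise
term `c` cancels in the difference and averaging over `i` leaves `2 Tr(AΣ) / n`. Gaussianity only
enters through the first two moments, read off from the one-dimensional projections.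
-/

open MeasureTheory ProbabilityTheory Matrix
open scoped NNReal ENNReal

lemma Matrix.IsSymm.ext_of_dotProduct_mulVec_self {κ R : Type*} [Fintype κ] [CommRing R]
    [NoZeroDivisors R] [CharZero R] {M M' : Matrix κ κ R} (hM : M.IsSymm) (hM' : M'.IsSymm)
    (h : ∀ u, u ⬝ᵥ M *ᵥ u = u ⬝ᵥ M' *ᵥ u) : M = M' := by
  classical
  ext j k
  -- polarization at `eⱼ + eₖ`
  have hjk := h (Pi.single j 1 + Pi.single k 1)
  have hj := h (Pi.single j 1)
  have hk := h (Pi.single k 1)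
  simp only [add_dotProduct, mulVec_add, dotProduct_add, single_one_dotProduct,
    mulVec_single_one, col_apply] at hjk hj hk
  rw [hM.apply j k, hM'.apply j k] at hjk
  have : 2 * M j k = 2 * M' j k := by linear_combination hjk - hj - hk
  exact mul_left_cancel₀ two_ne_zero this

lemma sum_sq_single_one_sub {ι R : Type*} [Fintype ι] [DecidableEq ι] [CommRing R] (i : ι)
    (α : ι → R) : ∑ m, ((Pi.single i 1 : ι → R) m - α m) ^ 2 = 1 - 2 * α i + ∑ m, α m ^ 2 := by
  simp [sub_sq, Finset.sum_add_distrib, Finset.sum_sub_distrib, Pi.single_apply]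

section

variable {Ω κ : Type*} [MeasurableSpace Ω] {P : Measure Ω}

lemma ProbabilityTheory.HasLaw.of_map_eq {𝓧 : Type*} [MeasurableSpace 𝓧] {X : Ω → 𝓧}
    {μ : Measure 𝓧} [NeZero μ] (h : P.map X = μ) : HasLaw X μ P :=
  ⟨.of_map_ne_zero (h ▸ NeZero.ne μ), h⟩

section Gaussian

variable {m : ℝ} {v : ℝ≥0} {Y : Ω → ℝ}

lemma memLp_of_map_eq_gaussianReal (h : P.map Y = gaussianReal m v) {p : ℝ≥0∞} (hp : p ≠ ∞) :
    MemLp Y p P :=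
  (memLp_map_measure_iff aestronglyMeasurable_id (HasLaw.of_map_eq h).aemeasurable).1
    (h ▸ memLp_id_gaussianReal' p hp)

lemma integral_of_map_eq_gaussianReal (h : P.map Y = gaussianReal m v) : ∫ ω, Y ω ∂P = m :=
  (HasLaw.of_map_eq h).integral_eq.trans integral_id_gaussianReal

lemma variance_of_map_eq_gaussianReal (h : P.map Y = gaussianReal m v) : Var[Y; P] = v :=
  (HasLaw.of_map_eq h).variance_eq.trans variance_id_gaussianReal

end Gaussian

noncomputable def covMatrix (X : Ω → κ → ℝ) (P : Measure Ω) : Matrix κ κ ℝ :=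
  Matrix.of fun j k ↦ cov[fun ω ↦ X ω j, fun ω ↦ X ω k; P]

lemma covMatrix_isSymm (X : Ω → κ → ℝ) : (covMatrix X P).IsSymm :=
  Matrix.IsSymm.ext fun _ _ ↦ covariance_comm _ _

variable [Fintype κ]

lemma variance_dotProduct [IsFiniteMeasure P] {X : Ω → κ → ℝ} (hX : MemLp X 2 P) (u : κ → ℝ) :
    Var[fun ω ↦ u ⬝ᵥ X ω; P] = u ⬝ᵥ covMatrix X P *ᵥ u := by
  have hXu : ∀ j, MemLp (fun ω ↦ u j * X ω j) 2 P := fun j ↦ hX.eval j |>.const_mul (u j)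
  simp only [dotProduct]
  rw [← covariance_self (memLp_finsetSum _ fun j _ ↦ hXu j).aestronglyMeasurable.aemeasurable,
    covariance_fun_sum_fun_sum hXu hXu]
  simp only [covariance_const_mul_left, covariance_const_mul_right, mulVec, dotProduct,
    Finset.mul_sum, covMatrix, of_apply]
  congr 1 with j; congr 1 with k; ring

lemma integral_dotProduct_mulVec_self [IsProbabilityMeasure P] {X : Ω → κ → ℝ}
    (hX : MemLp X 2 P) (A : Matrix κ κ ℝ) :
    ∫ ω, X ω ⬝ᵥ A *ᵥ X ω ∂P
      = (A * covMatrix X P).trace + (∫ ω, X ω ∂P) ⬝ᵥ A *ᵥ ∫ ω, X ω ∂P := by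
  have hXj := hX.eval
  have hmean := eval_integral fun j ↦ (hXj j).integrable one_le_two
  have hmom : ∀ j k, ∫ ω, X ω j * X ω k ∂P
      = covMatrix X P k j + (∫ ω, X ω ∂P) j * (∫ ω, X ω ∂P) k := by
    intro j k
    rw [hmean, hmean, covMatrix, of_apply, covariance_comm, covariance_eq_sub (hXj j) (hXj k)]
    simp only [Pi.mul_apply]
    ring
  have hint : ∀ j k, Integrable (fun ω ↦ A j k * (X ω j * X ω k)) P :=
    fun j k ↦ ((hXj j).integrable_mul (hXj k)).const_mul _
  calc ∫ ω, X ω ⬝ᵥ A *ᵥ X ω ∂P = ∫ ω, ∑ j, ∑ k, A j k * (X ω j * X ω k) ∂P := by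
        congr 1 with ω
        simp only [dotProduct, mulVec, Finset.mul_sum]
        congr 1 with j; congr 1 with k; ring
    _ = ∑ j, ∑ k, A j k * (covMatrix X P k j + (∫ ω, X ω ∂P) j * (∫ ω, X ω ∂P) k) := by
        rw [integral_finsetSum _ fun j _ ↦ integrable_finsetSum _ fun k _ ↦ hint j k]
        congr 1 with j
        rw [integral_finsetSum _ fun k _ ↦ hint j k]
        congr 1 with k
        rw [integral_const_mul, hmom]
    _ = _ := by
        simp only [trace, diag, mul_apply, dotProduct, mulVec, mul_add, Finset.sum_add_distrib,
          Finset.mul_sum]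
        congr 1
        exact Finset.sum_congr rfl fun j _ ↦ Finset.sum_congr rfl fun k _ ↦ by ring

lemma covMatrix_sum_smul_of_pairwise_indepFun {ι : Type*} [Fintype ι] [IsFiniteMeasure P]
    {G : ι → Ω → κ → ℝ} (hG : ∀ p, MemLp (G p) 2 P)
    (hind : Pairwise fun p q ↦ IndepFun (G p) (G q) P) (b : ι → ℝ) :
    covMatrix (fun ω ↦ ∑ p, b p • G p ω) P = ∑ p, b p ^ 2 • covMatrix (G p) P := by
  classical
  ext j k
  have hGb : ∀ p j, MemLp (fun ω ↦ b p * G p ω j) 2 P := fun p j ↦ (hG p).eval j |>.const_mul _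
  simp only [covMatrix, of_apply, Finset.sum_apply, Pi.smul_apply, smul_eq_mul,
    Matrix.sum_apply, Matrix.smul_apply]
  rw [covariance_fun_sum_fun_sum (fun p ↦ hGb p j) (fun p ↦ hGb p k)]
  refine Finset.sum_congr rfl fun p _ ↦ ?_
  rw [Finset.sum_eq_single p]
  · rw [covariance_const_mul_left, covariance_const_mul_right]; ring
  · intro q _ hqp
    have hcov : cov[fun ω ↦ G p ω j, fun ω ↦ G q ω k; P] = 0 :=
      ((hind hqp.symm).comp (measurable_pi_apply j) (measurable_pi_apply k)).covariance_eq_zero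
        ((hG p).eval j) ((hG q).eval k)
    rw [covariance_const_mul_left, covariance_const_mul_right, hcov, mul_zero, mul_zero]
  · simp

lemma integral_dotProduct_mulVec_sum_smul_of_pairwise_indepFun {ι : Type*} [Fintype ι]
    [IsProbabilityMeasure P] {G : ι → Ω → κ → ℝ} (hG : ∀ p, MemLp (G p) 2 P)
    (hind : Pairwise fun p q ↦ IndepFun (G p) (G q) P) {b : ι → ℝ}
    (hb : ∑ p, b p • ∫ ω, G p ω ∂P = 0) (A : Matrix κ κ ℝ) :
    ∫ ω, (∑ p, b p • G p ω) ⬝ᵥ A *ᵥ ∑ p, b p • G p ω ∂P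
      = ∑ p, b p ^ 2 * (A * covMatrix (G p) P).trace := by
  have hsum : MemLp (fun ω ↦ ∑ p, b p • G p ω) 2 P :=
    memLp_finsetSum _ fun p _ ↦ (hG p).const_smul (b p)
  rw [integral_dotProduct_mulVec_self hsum, covMatrix_sum_smul_of_pairwise_indepFun hG hind,
    integral_finsetSum (f := fun p ω ↦ b p • G p ω) _
      fun p _ ↦ ((hG p).const_smul (b p)).integrable one_le_two]
  simp only [integral_smul, hb, mulVec_zero, dotProduct_zero, add_zero, Matrix.mul_sum,
    Matrix.mul_smul, trace_sum, trace_smul, smul_eq_mul]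

section GaussianVector

variable {X : Ω → κ → ℝ}

lemma memLp_of_map_dotProduct_eq_gaussianReal {m : (κ → ℝ) → ℝ} {v : (κ → ℝ) → ℝ≥0}
    (h : ∀ u, P.map (fun ω ↦ u ⬝ᵥ X ω) = gaussianReal (m u) (v u)) {p : ℝ≥0∞} (hp : p ≠ ∞) :
    MemLp X p P := by
  classical
  refine memLp_pi_iff.2 fun j ↦ ?_
  simpa only [single_one_dotProduct] using memLp_of_map_eq_gaussianReal (h (Pi.single j 1)) hp

lemma integral_eq_of_map_dotProduct_eq_gaussianReal {μ : κ → ℝ} {v : (κ → ℝ) → ℝ≥0}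
    (h : ∀ u, P.map (fun ω ↦ u ⬝ᵥ X ω) = gaussianReal (u ⬝ᵥ μ) (v u)) :
    ∫ ω, X ω ∂P = μ := by
  classical
  ext j
  rw [eval_integral fun j ↦ memLp_one_iff_integrable.1
    ((memLp_of_map_dotProduct_eq_gaussianReal h ENNReal.one_ne_top).eval j)]
  simpa only [single_one_dotProduct] using integral_of_map_eq_gaussianReal (h (Pi.single j 1))

lemma covMatrix_eq_of_map_dotProduct_eq_gaussianReal [IsFiniteMeasure P] {m : (κ → ℝ) → ℝ}
    {S : Matrix κ κ ℝ} (hS : S.PosSemidef)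
    (h : ∀ u, P.map (fun ω ↦ u ⬝ᵥ X ω) = gaussianReal (m u) (u ⬝ᵥ S *ᵥ u).toNNReal) :
    covMatrix X P = S := by
  refine (covMatrix_isSymm X).ext_of_dotProduct_mulVec_self
    (isHermitian_iff_isSymm.1 hS.isHermitian) fun u ↦ ?_
  rw [← variance_dotProduct (memLp_of_map_dotProduct_eq_gaussianReal h ENNReal.ofNat_ne_top),
    variance_of_map_eq_gaussianReal (h u), Real.coe_toNNReal _ ?_]
  simpa using hS.dotProduct_mulVec_nonneg u

end GaussianVector

lemma integral_dotProduct_mulVec_affineCombination_sub [IsProbabilityMeasure P] {n : ℕ}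
    {Z : Fin n → Ω → κ → ℝ} {N Zt : Ω → κ → ℝ}
    (hindep : iIndepFun (Sum.elim Z fun b : Bool ↦ if b then Zt else N) P)
    (hZ : ∀ i, MemLp (Z i) 2 P) (hZt : MemLp Zt 2 P) (hN : MemLp N 2 P)
    {μ : κ → ℝ} (hZμ : ∀ i, ∫ ω, Z i ω ∂P = μ) (hZtμ : ∫ ω, Zt ω ∂P = μ)
    (hNμ : ∫ ω, N ω ∂P = 0)
    {S : Matrix κ κ ℝ} (hZS : ∀ i, covMatrix (Z i) P = S) (hZtS : covMatrix Zt P = S)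
    {α : Fin n → ℝ} (hα : ∑ i, α i = 1) (A : Matrix κ κ ℝ) (a : Fin n → ℝ) (t : ℝ)
    (hat : ∑ i, a i + t = 1) {Y : Ω → κ → ℝ}
    (hY : ∀ ω, Y ω = ∑ i, a i • Z i ω + t • Zt ω - (∑ i, α i • Z i ω + N ω)) :
    ∫ ω, Y ω ⬝ᵥ A *ᵥ Y ω ∂P
      = (∑ i, (a i - α i) ^ 2 + t ^ 2) * (A * S).trace + (A * covMatrix N P).trace := by
  set G : Fin n ⊕ Bool → Ω → κ → ℝ := Sum.elim Z fun e ↦ if e then Zt else N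
  set b : Fin n ⊕ Bool → ℝ := Sum.elim (a - α) fun e ↦ if e then t else -1
  have hG : ∀ p, MemLp (G p) 2 P := by rintro (i | _ | _) <;> simp [G, *]
  have hres : Y = fun ω ↦ ∑ p, b p • G p ω := by
    ext1 ω
    simp only [hY, Fintype.sum_sum_type, Fintype.sum_bool, G, b, Sum.elim_inl, Sum.elim_inr,
      if_true, Bool.false_eq_true, if_false, Pi.sub_apply, sub_smul, neg_smul, one_smul,
      Finset.sum_sub_distrib]
    abel
  have hcenter : ∑ p, b p • ∫ ω, G p ω ∂P = 0 := by
    simp only [Fintype.sum_sum_type, Fintype.sum_bool, G, b, Sum.elim_inl, Sum.elim_inr, if_true,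
      Bool.false_eq_true, if_false, Pi.sub_apply, hZμ, hZtμ, hNμ, smul_zero, add_zero,
      ← Finset.sum_smul, ← add_smul, Finset.sum_sub_distrib, hα]
    rw [sub_add_eq_add_sub, hat, sub_self, zero_smul]
  rw [hres, integral_dotProduct_mulVec_sum_smul_of_pairwise_indepFun hG
    (fun p q h ↦ hindep.indepFun h) hcenter]
  simp only [Fintype.sum_sum_type, Fintype.sum_bool, G, b, Sum.elim_inl, Sum.elim_inr, if_true,
    Bool.false_eq_true, if_false, hZS, hZtS, Pi.sub_apply, ← Finset.sum_mul]
  ring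

theorem generalization_error_of_moments [IsProbabilityMeasure P] {n : ℕ}
    {Z : Fin n → Ω → κ → ℝ} {N Zt : Ω → κ → ℝ}
    (hindep : iIndepFun (Sum.elim Z fun b : Bool ↦ if b then Zt else N) P)
    (hZ : ∀ i, MemLp (Z i) 2 P) (hZt : MemLp Zt 2 P) (hN : MemLp N 2 P)
    {μ : κ → ℝ} (hZμ : ∀ i, ∫ ω, Z i ω ∂P = μ) (hZtμ : ∫ ω, Zt ω ∂P = μ)
    (hNμ : ∫ ω, N ω ∂P = 0)
    {S : Matrix κ κ ℝ} (hZS : ∀ i, covMatrix (Z i) P = S) (hZtS : covMatrix Zt P = S)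
    {α : Fin n → ℝ} (hα : ∑ i, α i = 1) (A : Matrix κ κ ℝ)
    {W : Ω → κ → ℝ} (hW : W = fun ω ↦ ∑ i, α i • Z i ω + N ω) :
    ∫ ω, (Zt ω - W ω) ⬝ᵥ A *ᵥ (Zt ω - W ω) ∂P
      - (1 / n) * ∑ i, ∫ ω, (Z i ω - W ω) ⬝ᵥ A *ᵥ (Z i ω - W ω) ∂P
    = 2 * (A * S).trace / n := by
  have hn : (n : ℝ) ≠ 0 := by
    rintro h0
    obtain rfl := Nat.cast_eq_zero.1 h0
    simp at hα
  have key := integral_dotProduct_mulVec_affineCombination_sub hindep hZ hZt hN hZμ hZtμ hNμ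
    hZS hZtS hα A
  set T := (A * S).trace
  set s := ∑ m, α m ^ 2
  set c := (A * covMatrix N P).trace
  have hgen : ∫ ω, (Zt ω - W ω) ⬝ᵥ A *ᵥ (Zt ω - W ω) ∂P = (s + 1) * T + c := by
    rw [key 0 1 (by simp) (by simp [hW])]
    simp [s]
  have hemp : ∀ i, ∫ ω, (Z i ω - W ω) ⬝ᵥ A *ᵥ (Z i ω - W ω) ∂P = (1 - 2 * α i + s) * T + c := by
    intro i
    rw [key (Pi.single i 1) 0 (by simp) (by simp [hW, Pi.single_apply, ite_smul]),
      sum_sq_single_one_sub]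
    ring
  have havg : ∑ i, ((1 - 2 * α i + s) * T + c) = n * ((s + 1) * T + c) - 2 * T := by
    simp only [Finset.sum_add_distrib, ← Finset.sum_mul, Finset.sum_sub_distrib, ← Finset.mul_sum,
      hα, Finset.sum_const, Finset.card_univ, Fintype.card_fin, nsmul_eq_mul]
    ring
  rw [hgen, Finset.sum_congr rfl fun i _ ↦ hemp i, havg]
  field_simp
  ring

end

theorem generalization_error_vector_gaussian_general
    {Ω : Type*} [MeasurableSpace Ω] (P : Measure Ω) [IsProbabilityMeasure P]
    (n d : ℕ) (μ : Fin d → ℝ) (S : Matrix (Fin d) (Fin d) ℝ)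
    (hS : S.PosSemidef) (σN2 : ℝ)
    (A : Matrix (Fin d) (Fin d) ℝ)
    (α : Fin n → ℝ) (hsum : ∑ i, α i = 1)
    (Z : Fin n → Ω → Fin d → ℝ) (N Zt : Ω → Fin d → ℝ)
    (hindep : iIndepFun
      (Sum.elim Z (fun b : Bool => if b then Zt else N)) P)
    (hZ : ∀ i, ∀ u : Fin d → ℝ, Measure.map (fun ω => u ⬝ᵥ Z i ω) P
        = gaussianReal (u ⬝ᵥ μ) (Real.toNNReal (u ⬝ᵥ S.mulVec u)))
    (hZt : ∀ u : Fin d → ℝ, Measure.map (fun ω => u ⬝ᵥ Zt ω) P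
        = gaussianReal (u ⬝ᵥ μ) (Real.toNNReal (u ⬝ᵥ S.mulVec u)))
    (hN : ∀ u : Fin d → ℝ, Measure.map (fun ω => u ⬝ᵥ N ω) P
        = gaussianReal 0 (Real.toNNReal (σN2 * (u ⬝ᵥ u))))
    (W : Ω → Fin d → ℝ) (hW : W = fun ω => (∑ i, α i • Z i ω) + N ω) :
    (∫ ω, (Zt ω - W ω) ⬝ᵥ A.mulVec (Zt ω - W ω) ∂P)
      - (1 / n) * ∑ i, ∫ ω, (Z i ω - W ω) ⬝ᵥ A.mulVec (Z i ω - W ω) ∂P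
    = 2 * (A * S).trace / n := by
  have hN₀ : ∀ u, P.map (fun ω ↦ u ⬝ᵥ N ω) = gaussianReal (u ⬝ᵥ 0) (σN2 * (u ⬝ᵥ u)).toNNReal := by
    simpa only [dotProduct_zero] using hN
  exact generalization_error_of_moments hindep
    (fun i ↦ memLp_of_map_dotProduct_eq_gaussianReal (hZ i) ENNReal.ofNat_ne_top)
    (memLp_of_map_dotProduct_eq_gaussianReal hZt ENNReal.ofNat_ne_top)
    (memLp_of_map_dotProduct_eq_gaussianReal hN ENNReal.ofNat_ne_top)
    (fun i ↦ integral_eq_of_map_dotProduct_eq_gaussianReal (hZ i))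
    (integral_eq_of_map_dotProduct_eq_gaussianReal hZt)
    (integral_eq_of_map_dotProduct_eq_gaussianReal hN₀)
    (fun i ↦ covMatrix_eq_of_map_dotProduct_eq_gaussianReal hS (hZ i))
    (covMatrix_eq_of_map_dotProduct_eq_gaussianReal hS hZt) hsum A hW

/-- Vector Gaussian generalization error: with loss (w−z)ᵀA(w−z), the expected
generalization error of the weighted-average algorithm equals 2·Tr(AΣ)/n.
Gaussianity of a random vector is expressed via one-dimensional projections. -/
theorem generalization_error_vector_gaussian
    {Ω : Type*} [MeasurableSpace Ω] (P : Measure Ω) [IsProbabilityMeasure P]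
    (n d : ℕ) (hn : 0 < n) (μ : Fin d → ℝ) (S : Matrix (Fin d) (Fin d) ℝ)
    (hS : S.PosSemidef) (σN2 : ℝ) (hσN : 0 ≤ σN2)
    (A : Matrix (Fin d) (Fin d) ℝ) (hA : A.PosDef)
    (α : Fin n → ℝ) (hα : ∀ i, 0 ≤ α i) (hsum : ∑ i, α i = 1)
    (Z : Fin n → Ω → Fin d → ℝ) (N Zt : Ω → Fin d → ℝ)
    (hindep : iIndepFun
      (Sum.elim Z (fun b : Bool => if b then Zt else N)) P)
    (hZ : ∀ i, ∀ u : Fin d → ℝ, Measure.map (fun ω => u ⬝ᵥ Z i ω) P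
        = gaussianReal (u ⬝ᵥ μ) (Real.toNNReal (u ⬝ᵥ S.mulVec u)))
    (hZt : ∀ u : Fin d → ℝ, Measure.map (fun ω => u ⬝ᵥ Zt ω) P
        = gaussianReal (u ⬝ᵥ μ) (Real.toNNReal (u ⬝ᵥ S.mulVec u)))
    (hN : ∀ u : Fin d → ℝ, Measure.map (fun ω => u ⬝ᵥ N ω) P
        = gaussianReal 0 (Real.toNNReal (σN2 * (u ⬝ᵥ u))))
    (W : Ω → Fin d → ℝ) (hW : W = fun ω => (∑ i, α i • Z i ω) + N ω) :
    (∫ ω, (Zt ω - W ω) ⬝ᵥ A.mulVec (Zt ω - W ω) ∂P)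
      - (1 / n) * ∑ i, ∫ ω, (Z i ω - W ω) ⬝ᵥ A.mulVec (Z i ω - W ω) ∂P
    = 2 * (A * S).trace / n :=
  generalization_error_vector_gaussian_general P n d μ S hS σN2 A α hsum Z N Zt hindep hZ hZt hN W
    hW
end

section
/- Tightness via loss decomposition in the vector Gaussian setting: with A = UDUᵀ the eigendecomposition of the symmetric positive definite matrix A (D = diag(λ₁,...,λ_d), U orthogonal with columns Uⱼ), the per-eigendirection bound evaluates as inf_{λ>0}[ (E[KL(P_{√λⱼUⱼᵀW|Zᵢ}‖Qⁱ)] + E[Λ_{F_{i,j},Qⁱ}(λ)])/λ ] = 2αᵢλⱼ·Tr[UⱼUⱼᵀΣ], where E[KL] = αᵢ²Tr[UⱼUⱼᵀΣ]/(2cⱼ), E[Λ(λ)] = 2λⱼ²λ²cⱼTr[UⱼUⱼᵀΣ], cⱼ = Σ_{k≠i}αₖ²UⱼᵀΣUⱼ + σ_N²; summing over j and averaging over i gives exactly 2·Tr[AΣ]/n, the true generalization error, using Σⱼ λⱼUⱼUⱼᵀ = A. -/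
/-!
For a, b ≥ 0 the function l ↦ (a + b l²)/l = a/l + b l has infimum 2√(ab) on (0, ∞) (AM-GM,
attained at l = √(a/b) when a, b > 0). With a = αᵢ²Tⱼ/(2cⱼ) and b = 2λⱼ²cⱼTⱼ the noise level cⱼ
cancels in ab = (αᵢλⱼTⱼ)², giving the per-direction value 2αᵢλⱼTⱼ. Summing over j gives
2 ∑ⱼ λⱼ Tⱼ = 2 Tr[AΣ] since A = ∑ⱼ λⱼ UⱼUⱼᵀ, and the average over i only sees ∑ᵢ αᵢ = 1.
-/

open MeasureTheory ProbabilityTheory Real Matrix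
open scoped NNReal ENNReal

section AMGM

variable {a b : ℝ}

lemma two_mul_sqrt_mul_le_add_mul_sq_div_s19 (ha : 0 ≤ a) (hb : 0 ≤ b) {l : ℝ} (hl : 0 < l) :
    2 * √(a * b) ≤ (a + b * l ^ 2) / l := by
  rw [le_div_iff₀ hl, sqrt_mul ha b]
  nlinarith [sq_nonneg (√a - √b * l), sq_sqrt ha, sq_sqrt hb]

/-- Near-minimizers `l = (√a + δ)/(√b + δ)`, which stay positive also when `a` or `b` vanishes. -/
lemma exists_add_mul_sq_div_le (ha : 0 ≤ a) (hb : 0 ≤ b) {ε : ℝ} (hε : 0 < ε) :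
    ∃ l : ℝ, 0 < l ∧ (a + b * l ^ 2) / l ≤ 2 * √(a * b) + ε := by
  set s := √a
  set t := √b
  have hs : 0 ≤ s := sqrt_nonneg a
  have ht : 0 ≤ t := sqrt_nonneg b
  set δ := ε / (s + t + 1)
  have hδ : 0 < δ := by positivity
  have hδε : δ * (s + t) ≤ ε := by
    rw [div_mul_eq_mul_div, div_le_iff₀ (by positivity)]
    nlinarith
  refine ⟨(s + δ) / (t + δ), by positivity, ?_⟩
  have hs_le : s ^ 2 / (s + δ) ≤ s := by
    rw [div_le_iff₀ (by positivity)]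
    nlinarith
  have ht_le : t ^ 2 / (t + δ) ≤ t := by
    rw [div_le_iff₀ (by positivity)]
    nlinarith
  calc (a + b * ((s + δ) / (t + δ)) ^ 2) / ((s + δ) / (t + δ))
      = s ^ 2 / (s + δ) * (t + δ) + t ^ 2 / (t + δ) * (s + δ) := by
        rw [sq_sqrt ha, sq_sqrt hb]
        field_simp
    _ ≤ s * (t + δ) + t * (s + δ) := by gcongr
    _ = 2 * √(a * b) + δ * (s + t) := by rw [sqrt_mul ha b]; ring
    _ ≤ 2 * √(a * b) + ε := by linarith

theorem iInf_Ioi_add_mul_sq_div (ha : 0 ≤ a) (hb : 0 ≤ b) :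
    ⨅ l : Set.Ioi (0 : ℝ), (a + b * (l : ℝ) ^ 2) / (l : ℝ) = 2 * √(a * b) := by
  have hlower : ∀ l : Set.Ioi (0 : ℝ), 2 * √(a * b) ≤ (a + b * (l : ℝ) ^ 2) / (l : ℝ) :=
    fun l => two_mul_sqrt_mul_le_add_mul_sq_div_s19 ha hb l.2
  refine le_antisymm (le_of_forall_pos_le_add fun ε hε => ?_) (le_ciInf hlower)
  obtain ⟨l, hl, hle⟩ := exists_add_mul_sq_div_le ha hb hε
  exact (ciInf_le ⟨_, Set.forall_mem_range.2 hlower⟩ ⟨l, hl⟩).trans hle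

end AMGM

theorem trace_sum_smul_vecMulVec_mul {ι n R : Type*} [Fintype ι] [Fintype n] [CommSemiring R]
    (lam : ι → R) (U : ι → n → R) (S : Matrix n n R) :
    ((∑ j, lam j • vecMulVec (U j) (U j)) * S).trace = ∑ j, lam j * (U j ⬝ᵥ S *ᵥ U j) := by
  simp only [Finset.sum_mul, trace_sum, smul_mul, trace_smul, smul_eq_mul, vecMulVec_mul,
    trace_vecMulVec, dotProduct_mulVec, dotProduct_comm (U _ ᵥ* S)]

theorem tightness_via_decomposition_general
    (n d : ℕ)
    (α : Fin n → ℝ) (hα : ∀ k, 0 ≤ α k) (hsum : ∑ k, α k = 1)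
    (S : Matrix (Fin d) (Fin d) ℝ) (hS : S.PosSemidef)
    (lam : Fin d → ℝ) (hlam : ∀ j, 0 < lam j)
    (U : Fin d → Fin d → ℝ)
    (A : Matrix (Fin d) (Fin d) ℝ)
    (hA : A = ∑ j, lam j • Matrix.vecMulVec (U j) (U j))
    (T : Fin d → ℝ) (hT : ∀ j, T j = U j ⬝ᵥ S.mulVec (U j))
    (c : Fin n → Fin d → ℝ)
    (hcpos : ∀ i j, 0 < c i j) :
    (∀ i j, (⨅ l : Set.Ioi (0 : ℝ),
        (α i ^ 2 * T j / (2 * c i j)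
          + 2 * lam j ^ 2 * (l : ℝ) ^ 2 * c i j * T j) / (l : ℝ))
      = 2 * α i * lam j * T j)
    ∧ (1 / n : ℝ) * ∑ i, ∑ j, 2 * α i * lam j * T j = 2 * (A * S).trace / n := by
  have hT_nonneg : ∀ j, 0 ≤ T j := fun j => hT j ▸ hS.dotProduct_mulVec_nonneg (U j)
  refine ⟨fun i j => ?_, ?_⟩
  · have hc := hcpos i j
    have hTj := hT_nonneg j
    have hl := (hlam j).le
    have hai := hα i
    have hprod : α i ^ 2 * T j / (2 * c i j) * (2 * lam j ^ 2 * c i j * T j)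
        = (α i * lam j * T j) ^ 2 := by
      field_simp
    rw [iInf_congr fun l : Set.Ioi (0 : ℝ) => show _ = (α i ^ 2 * T j / (2 * c i j)
        + 2 * lam j ^ 2 * c i j * T j * (l : ℝ) ^ 2) / (l : ℝ) by ring,
      iInf_Ioi_add_mul_sq_div (by positivity) (by positivity), hprod,
      sqrt_sq (by positivity)]
    ring
  · have htrace : (A * S).trace = ∑ j, lam j * T j := by
      rw [hA, trace_sum_smul_vecMulVec_mul]
      simp only [hT]
    have hdouble : ∑ i, ∑ j, 2 * α i * lam j * T j = 2 * (∑ i, α i) * ∑ j, lam j * T j := by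
      simp_rw [mul_assoc, Finset.sum_mul_sum, Finset.mul_sum]
    rw [hdouble, hsum, htrace]
    ring

/-- Tightness via loss decomposition in the vector Gaussian setting: the
per-eigendirection optimized bound equals 2αᵢλⱼTr[UⱼUⱼᵀΣ], and summing over j and
averaging over i gives exactly 2Tr[AΣ]/n. -/
theorem tightness_via_decomposition
    (n d : ℕ) (hn : 0 < n) (σN2 : ℝ) (hσN : 0 ≤ σN2)
    (α : Fin n → ℝ) (hα : ∀ k, 0 ≤ α k) (hsum : ∑ k, α k = 1)
    (S : Matrix (Fin d) (Fin d) ℝ) (hS : S.PosSemidef)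
    (lam : Fin d → ℝ) (hlam : ∀ j, 0 < lam j)
    (U : Fin d → Fin d → ℝ)
    (hU : ∀ j k, U j ⬝ᵥ U k = if j = k then 1 else 0)
    (A : Matrix (Fin d) (Fin d) ℝ)
    (hA : A = ∑ j, lam j • Matrix.vecMulVec (U j) (U j))
    (T : Fin d → ℝ) (hT : ∀ j, T j = U j ⬝ᵥ S.mulVec (U j))
    (c : Fin n → Fin d → ℝ)
    (hc : ∀ i j, c i j = (∑ k ∈ Finset.univ.erase i, α k ^ 2) * T j + σN2)
    (hcpos : ∀ i j, 0 < c i j) :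
    (∀ i j, (⨅ l : Set.Ioi (0 : ℝ),
        (α i ^ 2 * T j / (2 * c i j)
          + 2 * lam j ^ 2 * (l : ℝ) ^ 2 * c i j * T j) / (l : ℝ))
      = 2 * α i * lam j * T j)
    ∧ (1 / n : ℝ) * ∑ i, ∑ j, 2 * α i * lam j * T j = 2 * (A * S).trace / n :=
  tightness_via_decomposition_general n d α hα hsum S hS lam hlam U A hA T hT c hcpos
end
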